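/- arXiv:2510.20537 — 2 statements merged into one kernel-verified Lean document; each statement's English description precedes it below -/
import Mathlib

section
/- Let f₁,…,fₙ be polynomials in ℝ[t₁,…,tₘ] with n > m. Then there exists a nonzero polynomial F ∈ ℝ[x₁,…,xₙ] such that F(f₁(t),…,fₙ(t)) = 0 for all t ∈ ℝᵐ; i.e., the image of the polynomial map t ↦ (f₁(t),…,fₙ(t)) is contained in the zero set of a nonzero polynomial. -/
open MvPolynomial

/-- The set of exponent vectors bounded by `r` in each coordinate is equivalent to
`Fin k → Fin (r+1)`. -/
noncomputable def expEquiv (k r : ℕ) :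
    {s : Fin k →₀ ℕ | ∀ i, s i ≤ r} ≃ (Fin k → Fin (r + 1)) where
  toFun s := fun i => ⟨s.1 i, Nat.lt_succ_of_le (s.2 i)⟩
  invFun g := ⟨Finsupp.equivFunOnFinite.symm (fun i => (g i : ℕ)),
    fun i => by simpa using Nat.lt_succ_iff.mp (g i).2⟩
  left_inv s := by
    ext i
    simp
  right_inv g := by
    ext i
    simp

lemma finrank_restrictDegree (k r : ℕ) :
    Module.finrank ℝ (restrictDegree (Fin k) ℝ r) = (r + 1) ^ k := by
  have hfin : Finite {s : Fin k →₀ ℕ | ∀ i, s i ≤ r} := Finite.of_equiv _ (expEquiv k r).symm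
  have : Fintype {s : Fin k →₀ ℕ | ∀ i, s i ≤ r} := Fintype.ofFinite _
  rw [show restrictDegree (Fin k) ℝ r = restrictSupport ℝ {s : Fin k →₀ ℕ | ∀ i, s i ≤ r} from rfl,
    Module.finrank_eq_card_basis (basisRestrictSupport ℝ _)]
  rw [Fintype.card_congr (expEquiv k r)]
  simp [Fintype.card_fun]

lemma my_aeval_eq_eval {σ : Type*} (g : σ → ℝ) (p : MvPolynomial σ ℝ) :
    aeval g p = eval g p := by
  rw [← coe_aeval_eq_eval]
  rfl

/-- Algebraic implicitization: given more polynomials than variables, the image of the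
polynomial map `t ↦ (f₁ t, …, fₙ t)` lies in the zero set of a nonzero polynomial. -/
theorem stmt_0 (m n : ℕ) (hnm : n > m) (f : Fin n → MvPolynomial (Fin m) ℝ) :
    ∃ F : MvPolynomial (Fin n) ℝ, F ≠ 0 ∧
      ∀ t : Fin m → ℝ,
        MvPolynomial.eval (fun i => MvPolynomial.eval t (f i)) F = 0 := by
  -- Degree bound for the f i
  set D : ℕ := (Finset.univ.sup fun i => (f i).totalDegree) + 1 with hD_def
  have hD : ∀ i, (f i).totalDegree ≤ D := by
    intro i
    rw [hD_def]
    exact Nat.le_succ_of_le (Finset.le_sup (f := fun i => (f i).totalDegree) (Finset.mem_univ i))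
  have hn1 : 1 ≤ n := le_trans (Nat.succ_le_succ (Nat.zero_le m)) hnm
  have hnD : 1 ≤ n * D := Nat.one_le_iff_ne_zero.mpr (by positivity)
  set d : ℕ := (n * D) ^ m with hd_def
  have hd1 : 1 ≤ d := Nat.one_le_pow _ _ hnD
  set N : ℕ := n * d * D with hN_def
  -- The algebra map
  set L : MvPolynomial (Fin n) ℝ →ₗ[ℝ] MvPolynomial (Fin m) ℝ := (aeval f).toLinearMap with hL
  -- L maps restrictDegree d into restrictDegree N
  have hmap : ∀ p ∈ restrictDegree (Fin n) ℝ d, L p ∈ restrictDegree (Fin m) ℝ N := by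
    intro p hp
    apply restrictTotalDegree_le_restrictDegree
    rw [mem_restrictTotalDegree]
    rw [mem_restrictDegree] at hp
    have hLp : L p = ∑ s ∈ p.support, aeval f (monomial s (coeff s p)) := by
      conv_lhs => rw [hL, AlgHom.toLinearMap_apply, p.as_sum, map_sum]
    rw [hLp]
    apply totalDegree_finsetSum_le
    intro s hs
    rw [aeval_monomial]
    refine le_trans (totalDegree_mul _ _) ?_
    have h1 : (algebraMap ℝ (MvPolynomial (Fin m) ℝ) (coeff s p)).totalDegree = 0 := by
      simpa using totalDegree_C (σ := Fin m) (coeff s p)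
    rw [h1, zero_add]
    refine le_trans (totalDegree_finset_prod _ _) ?_
    calc ∑ i ∈ s.support, ((f i) ^ (s i)).totalDegree
        ≤ ∑ i ∈ s.support, d * D := by
          apply Finset.sum_le_sum
          intro i _
          refine le_trans (totalDegree_pow _ _) ?_
          exact Nat.mul_le_mul (hp s hs i) (hD i)
      _ ≤ ∑ _i ∈ (Finset.univ : Finset (Fin n)), d * D :=
          Finset.sum_le_sum_of_subset (Finset.subset_univ _)
      _ = n * (d * D) := by simp [Finset.sum_const, Finset.card_univ, mul_comm]
      _ = N := by rw [hN_def]; ring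
  -- The restricted linear map
  set L' := L.restrict hmap with hL'
  -- Dimension count
  have hdim : Module.finrank ℝ (restrictDegree (Fin m) ℝ N) <
      Module.finrank ℝ (restrictDegree (Fin n) ℝ d) := by
    rw [finrank_restrictDegree, finrank_restrictDegree]
    calc (N + 1) ^ m ≤ (n * D * (d + 1)) ^ m := by
          apply Nat.pow_le_pow_left
          rw [hN_def]
          calc n * d * D + 1 ≤ n * d * D + n * D := by
                exact Nat.add_le_add_left hnD _
            _ = n * D * (d + 1) := by ring
      _ = d * (d + 1) ^ m := by rw [mul_pow, hd_def]
      _ < (d + 1) * (d + 1) ^ m :=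
          (Nat.mul_lt_mul_right (by positivity)).mpr (by omega)
      _ = (d + 1) ^ (m + 1) := by ring
      _ ≤ (d + 1) ^ n := Nat.pow_le_pow_right (by omega) hnm
  -- L' is not injective
  have hni : ¬ Function.Injective L' := by
    intro hinj
    exact absurd (LinearMap.finrank_le_finrank_of_injective hinj) (not_le.mpr hdim)
  rw [Function.not_injective_iff] at hni
  obtain ⟨x, y, hxy, hne⟩ := hni
  refine ⟨(x : MvPolynomial (Fin n) ℝ) - (y : MvPolynomial (Fin n) ℝ), by
    intro h
    exact hne (Subtype.ext (by rwa [sub_eq_zero] at h)), ?_⟩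
  have hzero : aeval f ((x : MvPolynomial (Fin n) ℝ) - (y : MvPolynomial (Fin n) ℝ)) = 0 := by
    have h1 : L ((x : MvPolynomial (Fin n) ℝ)) = L ((y : MvPolynomial (Fin n) ℝ)) :=
      congrArg Subtype.val hxy
    rw [map_sub]
    change L _ - L _ = 0
    rw [h1, sub_self]
  intro t
  have key : aeval (fun i => aeval t (f i) : Fin n → ℝ)
      ((x : MvPolynomial (Fin n) ℝ) - (y : MvPolynomial (Fin n) ℝ)) = 0 := by
    rw [← comp_aeval_apply, hzero, map_zero]
  simp only [← my_aeval_eq_eval]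
  exact key
end

section
/- Let Δf₃, Δf₅ : ℝ → ℝ and Δf₆ : ℝ → ℝ be polynomial functions with zero constant term, let g₃(u₁) = u₁, g₅(u₂) = u₂, and let g₆(u₁,u₂) = u₁·u₂. If Δf₃(g₃(u₁)) + Δf₆(g₆(u₁,u₂)) + Δf₅(g₅(u₂)) = 0 for all u₁, u₂ ∈ ℝ, then Δf₃ = Δf₆ = Δf₅ = 0. -/
/-- Example 3 of the paper (additive-model counterexample): if univariate polynomials with
zero constant term satisfy `Δf₃(u₁) + Δf₆(u₁·u₂) + Δf₅(u₂) = 0` for all `u₁, u₂`, then all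
three polynomials are zero. -/
theorem stmt_16 (Δf₃ Δf₅ Δf₆ : Polynomial ℝ)
    (h₃ : Δf₃.coeff 0 = 0) (h₅ : Δf₅.coeff 0 = 0) (h₆ : Δf₆.coeff 0 = 0)
    (hsum : ∀ u₁ u₂ : ℝ,
      Δf₃.eval u₁ + Δf₆.eval (u₁ * u₂) + Δf₅.eval u₂ = 0) :
    Δf₃ = 0 ∧ Δf₆ = 0 ∧ Δf₅ = 0 := by
  have e₃ : Δf₃.eval 0 = 0 := by rw [← Polynomial.coeff_zero_eq_eval_zero]; exact h₃
  have e₅ : Δf₅.eval 0 = 0 := by rw [← Polynomial.coeff_zero_eq_eval_zero]; exact h₅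
  have e₆ : Δf₆.eval 0 = 0 := by rw [← Polynomial.coeff_zero_eq_eval_zero]; exact h₆
  have hz3 : Δf₃ = 0 := by
    apply Polynomial.funext
    intro x
    have := hsum x 0
    simp [e₅, e₆] at this
    simpa using this
  have hz5 : Δf₅ = 0 := by
    apply Polynomial.funext
    intro x
    have := hsum 0 x
    simp [e₃, e₆] at this
    simpa using this
  have hz6 : Δf₆ = 0 := by
    apply Polynomial.funext
    intro x
    have := hsum x 1
    rw [hz3, hz5] at this
    simpa using this
  exact ⟨hz3, hz6, hz5⟩
end
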